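/- (Lyapunov inequality underlying Theorem 4.3, Case (L2)) Let D ⊆ ℝ^d be an open neighborhood of 0, let Q^{(1)} be a conservative Q-matrix on S, and suppose Q(x) = Q^{(1)} for every x with |x| < α1, where α1 > 0. Suppose ρ, h : D∖{0} → (0,∞) are twice continuously differentiable, ℒ^{(i)}ρ(x) ≤ β_i h(x) for all x ∈ D∖{0} and i ∈ S (β ∈ ℝ^N), and ℒ^{(i)}h(x)/h(x) → 0 as x → 0 (within D∖{0}) for every i ∈ S. Suppose there exist c > 0 and ξ ∈ ℝ^N with ξ_i > 0 for all i such that (Q^{(1)}ξ)_i = −c − β_i for every i. Then there exists δ ∈ (0, α1] with {x : 0 < |x| < δ} ⊆ D∖{0} such that the function V(x,i) = ρ(x) + ξ_i h(x) satisfies 𝒜V(x,i) ≤ −(c/2) h(x) < 0 for all x with 0 < |x| < δ and all i ∈ S. -/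

import Mathlib

/-!
Along `V(x,j) = ρ(x) + ξ_j h(x)` the switching part of `𝒜V(x,i)` only sees the differences
`(ξ_j − ξ_i) h(x)`; since the rows of `Q(x) = Q^{(1)}` sum to zero it equals `(Q^{(1)}ξ)_i h(x)
= (−c − β_i) h(x)`. The diffusion part is linear, `ℒ^{(i)}ρ + ξ_i ℒ^{(i)}h ≤ β_i h + ξ_i ℒ^{(i)}h`,
and `ξ_i ℒ^{(i)}h ≤ (c/2) h` near `0` because `ℒ^{(i)}h = o(h)`.
-/

open scoped BigOperators
open Filter

/-- The diffusion generator `ℒ^{(i)}f(x) = ⟨b(x,i), ∇f(x)⟩ + (1/2) tr(a(x,i) ∇²f(x))`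
in a fixed environment, expressed via Fréchet derivatives on Euclidean space. -/
noncomputable def diffGen {d : ℕ}
    (b : EuclideanSpace ℝ (Fin d) → EuclideanSpace ℝ (Fin d))
    (a : EuclideanSpace ℝ (Fin d) → Matrix (Fin d) (Fin d) ℝ)
    (f : EuclideanSpace ℝ (Fin d) → ℝ) (x : EuclideanSpace ℝ (Fin d)) : ℝ :=
  fderiv ℝ f x (b x) +
    (1 / 2) * ∑ k, ∑ l, a x k l *
      fderiv ℝ (fun y => fderiv ℝ f y (EuclideanSpace.single l 1)) x
        (EuclideanSpace.single k 1)

/-- The full generator of the regime-switching diffusion: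
`𝒜V(x,i) = ℒ^{(i)}V(·,i)(x) + Σ_{j≠i} q_{ij}(x)(V(x,j) − V(x,i))`. -/
noncomputable def hybridGen {N d : ℕ}
    (b : EuclideanSpace ℝ (Fin d) → Fin N → EuclideanSpace ℝ (Fin d))
    (a : EuclideanSpace ℝ (Fin d) → Fin N → Matrix (Fin d) (Fin d) ℝ)
    (Q : EuclideanSpace ℝ (Fin d) → Matrix (Fin N) (Fin N) ℝ)
    (V : EuclideanSpace ℝ (Fin d) → Fin N → ℝ)
    (x : EuclideanSpace ℝ (Fin d)) (i : Fin N) : ℝ :=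
  diffGen (fun y => b y i) (fun y => a y i) (fun y => V y i) x +
    ∑ j ∈ Finset.univ.erase i, Q x i j * (V x j - V x i)

open scoped Matrix

section Generator

variable {d : ℕ} {b : EuclideanSpace ℝ (Fin d) → EuclideanSpace ℝ (Fin d)}
  {a : EuclideanSpace ℝ (Fin d) → Matrix (Fin d) (Fin d) ℝ}
  {f g : EuclideanSpace ℝ (Fin d) → ℝ} {x : EuclideanSpace ℝ (Fin d)}

lemma diffGen_add_const_mul (hf : ContDiffAt ℝ 2 f x) (hg : ContDiffAt ℝ 2 g x) (t : ℝ) :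
    diffGen b a (fun y => f y + t * g y) x = diffGen b a f x + t * diffGen b a g x := by
  have hf₁ : ∀ᶠ y in nhds x, DifferentiableAt ℝ f y :=
    hf.eventually (by simp) |>.mono fun y hy => hy.differentiableAt (by norm_num)
  have hg₁ : ∀ᶠ y in nhds x, DifferentiableAt ℝ g y :=
    hg.eventually (by simp) |>.mono fun y hy => hy.differentiableAt (by norm_num)
  have hf₂ : DifferentiableAt ℝ (fderiv ℝ f) x :=
    (hf.fderiv_right (m := 1) (by norm_num)).differentiableAt one_ne_zero
  have hg₂ : DifferentiableAt ℝ (fderiv ℝ g) x :=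
    (hg.fderiv_right (m := 1) (by norm_num)).differentiableAt one_ne_zero
  have hfderiv : fderiv ℝ (fun y => f y + t * g y) =ᶠ[nhds x]
      fun y => fderiv ℝ f y + t • fderiv ℝ g y := by
    filter_upwards [hf₁, hg₁] with y hfy hgy
    rw [fderiv_fun_add hfy (hgy.const_mul t), fderiv_const_mul hgy t]
  have hsecond : ∀ v, fderiv ℝ (fun y => fderiv ℝ (fun z => f z + t * g z) y v) x =
      fderiv ℝ (fun y => fderiv ℝ f y v) x + t • fderiv ℝ (fun y => fderiv ℝ g y v) x := by
    intro v
    have hfv := hf₂.clm_apply (differentiableAt_const v)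
    have hgv := hg₂.clm_apply (differentiableAt_const v)
    have happly : (fun y => fderiv ℝ (fun z => f z + t * g z) y v) =ᶠ[nhds x]
        fun y => fderiv ℝ f y v + t * fderiv ℝ g y v :=
      hfderiv.mono fun y hy => by simp [hy]
    rw [happly.fderiv_eq, fderiv_fun_add hfv (hgv.const_mul t), fderiv_const_mul hgv t]
  simp only [diffGen, hfderiv.eq_of_nhds, hsecond, add_apply,
    smul_apply, smul_eq_mul, mul_add, Finset.sum_add_distrib, Finset.mul_sum]
  ring_nf

end Generator

lemma sum_erase_mul_sub_eq_mulVec {ι R : Type*} [Fintype ι] [DecidableEq ι] [CommRing R]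
    (M : Matrix ι ι R) (v : ι → R) (i : ι) (hrow : ∑ j, M i j = 0) :
    ∑ j ∈ Finset.univ.erase i, M i j * (v j - v i) = (M *ᵥ v) i := by
  rw [Finset.sum_erase _ (by simp), Matrix.mulVec, dotProduct]
  simp only [mul_sub, Finset.sum_sub_distrib, ← Finset.sum_mul, hrow, zero_mul, sub_zero]

lemma hybridGen_add_const_mul {N d : ℕ}
    {b : EuclideanSpace ℝ (Fin d) → Fin N → EuclideanSpace ℝ (Fin d)}
    {a : EuclideanSpace ℝ (Fin d) → Fin N → Matrix (Fin d) (Fin d) ℝ}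
    {Q : EuclideanSpace ℝ (Fin d) → Matrix (Fin N) (Fin N) ℝ}
    {ρ h : EuclideanSpace ℝ (Fin d) → ℝ} {x : EuclideanSpace ℝ (Fin d)} {i : Fin N}
    (hρ : ContDiffAt ℝ 2 ρ x) (hh : ContDiffAt ℝ 2 h x) (hrow : ∑ j, Q x i j = 0) (ξ : Fin N → ℝ) :
    hybridGen b a Q (fun y j => ρ y + ξ j * h y) x i =
      diffGen (fun y => b y i) (fun y => a y i) ρ x +
        ξ i * diffGen (fun y => b y i) (fun y => a y i) h x + (Q x *ᵥ ξ) i * h x := by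
  have hjump : ∀ j, ρ x + ξ j * h x - (ρ x + ξ i * h x) = (ξ j - ξ i) * h x := fun j => by ring
  simp only [hybridGen, diffGen_add_const_mul hρ hh, hjump, ← mul_assoc, ← Finset.sum_mul,
    sum_erase_mul_sub_eq_mulVec _ _ _ hrow]

lemma eventually_le_mul_of_tendsto_div_zero {α : Type*} {l : Filter α} {g h : α → ℝ}
    (hgh : Tendsto (fun x => g x / h x) l (nhds 0)) (hh : ∀ᶠ x in l, 0 < h x)
    {ε : ℝ} (hε : 0 < ε) : ∀ᶠ x in l, g x ≤ ε * h x := by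
  filter_upwards [hgh.eventually (eventually_lt_nhds hε), hh] with x hx hx₀
  exact (div_le_iff₀ hx₀).1 hx.le

theorem lyapunov_stability_L2_general
    (N d : ℕ)
    (b : EuclideanSpace ℝ (Fin d) → Fin N → EuclideanSpace ℝ (Fin d))
    (a : EuclideanSpace ℝ (Fin d) → Fin N → Matrix (Fin d) (Fin d) ℝ)
    (Q : EuclideanSpace ℝ (Fin d) → Matrix (Fin N) (Fin N) ℝ)
    (hQrow : ∀ x i, ∑ j, Q x i j = 0)
    (D : Set (EuclideanSpace ℝ (Fin d))) (hD : IsOpen D) (h0D : (0 : EuclideanSpace ℝ (Fin d)) ∈ D)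
    (Q1 : Matrix (Fin N) (Fin N) ℝ)
    (α1 : ℝ) (hα1 : 0 < α1)
    (hQeq : ∀ x : EuclideanSpace ℝ (Fin d), ‖x‖ < α1 → Q x = Q1)
    (ρ h : EuclideanSpace ℝ (Fin d) → ℝ)
    (hhpos : ∀ x ∈ D \ {0}, 0 < h x)
    (hρC2 : ContDiffOn ℝ 2 ρ (D \ {0}))
    (hhC2 : ContDiffOn ℝ 2 h (D \ {0}))
    (β : Fin N → ℝ)
    (hL : ∀ x ∈ D \ {0}, ∀ i, diffGen (fun y => b y i) (fun y => a y i) ρ x ≤ β i * h x)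
    (hLh : ∀ i, Tendsto (fun x => diffGen (fun y => b y i) (fun y => a y i) h x / h x)
      (nhdsWithin 0 (D \ {0})) (nhds 0))
    (c : ℝ) (hc : 0 < c)
    (ξ : Fin N → ℝ) (hξ : ∀ i, 0 < ξ i)
    (hfred : ∀ i, Q1.mulVec ξ i = -c - β i) :
    ∃ δ : ℝ, 0 < δ ∧ δ ≤ α1 ∧
      {x : EuclideanSpace ℝ (Fin d) | x ≠ 0 ∧ ‖x‖ < δ} ⊆ D \ {0} ∧
      ∀ x : EuclideanSpace ℝ (Fin d), x ≠ 0 → ‖x‖ < δ → ∀ i,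
        hybridGen b a Q (fun y j => ρ y + ξ j * h y) x i ≤ -(c / 2) * h x ∧
        -(c / 2) * h x < 0 := by
  have hpunct : nhdsWithin 0 (D \ {0}) = nhdsWithin (0 : EuclideanSpace ℝ (Fin d)) {0}ᶜ := by
    rw [Set.sdiff_eq, nhdsWithin_inter_of_mem (mem_nhdsWithin_of_mem_nhds (hD.mem_nhds h0D))]
  have hsmall : ∀ i, ∀ᶠ x in nhdsWithin 0 (D \ {0}),
      ξ i * diffGen (fun y => b y i) (fun y => a y i) h x ≤ c / 2 * h x := fun i =>
    (eventually_le_mul_of_tendsto_div_zero (hLh i) (eventually_nhdsWithin_of_forall hhpos)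
      (div_pos (half_pos hc) (hξ i))).mono fun x hx => by
        rwa [div_mul_eq_mul_div, le_div_iff₀ (hξ i), mul_comm] at hx
  have hnear : ∀ᶠ x in nhdsWithin 0 {0}ᶜ, x ∈ D ∧
      ∀ i, ξ i * diffGen (fun y => b y i) (fun y => a y i) h x ≤ c / 2 * h x := by
    rw [← hpunct]
    exact (eventually_mem_nhdsWithin.mono fun x hx => hx.1).and (eventually_all.2 hsmall)
  obtain ⟨ε, hε, hεnear⟩ := Metric.eventually_nhds_iff.1 (eventually_nhdsWithin_iff.1 hnear)
  have hdist : ∀ {x : EuclideanSpace ℝ (Fin d)}, ‖x‖ < min ε α1 → dist x 0 < ε := fun hx => by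
    simpa using hx.trans_le (min_le_left _ _)
  refine ⟨min ε α1, lt_min hε hα1, min_le_right _ _,
    fun x hx => ⟨(hεnear (hdist hx.2) hx.1).1, hx.1⟩, fun x hx0 hxδ i => ?_⟩
  obtain ⟨hxD, hξh⟩ := hεnear (hdist hxδ) hx0
  replace hxD : x ∈ D \ {0} := ⟨hxD, hx0⟩
  have hhx := hhpos x hxD
  have hopen := (hD.sdiff isClosed_singleton).mem_nhds hxD
  rw [hybridGen_add_const_mul (hρC2.contDiffAt hopen) (hhC2.contDiffAt hopen) (hQrow x i),
    hQeq x (hxδ.trans_le (min_le_right _ _)), hfred i]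
  constructor <;> nlinarith [hL x hxD i, hξh i]

/-- (Lyapunov inequality underlying Theorem 4.3, Case (L2)): with `Q(x) = Q^{(1)}`
near `0`, `ℒ^{(i)}ρ ≤ β_i h` on `D∖{0}`, `ℒ^{(i)}h/h → 0` at `0`, and
`(Q^{(1)}ξ)_i = −c − β_i` with `ξ ≫ 0`, `c > 0`, there exists `δ ∈ (0, α1]` with
`{0 < |x| < δ} ⊆ D∖{0}` such that `V(x,i) = ρ(x) + ξ_i h(x)` satisfies
`𝒜V(x,i) ≤ −(c/2) h(x) < 0` for all `0 < |x| < δ` and all `i`. -/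
theorem lyapunov_stability_L2
    (N d : ℕ) (hN : 1 ≤ N) (hd : 1 ≤ d)
    (b : EuclideanSpace ℝ (Fin d) → Fin N → EuclideanSpace ℝ (Fin d))
    (a : EuclideanSpace ℝ (Fin d) → Fin N → Matrix (Fin d) (Fin d) ℝ)
    (ha : ∀ x i, (a x i).PosSemidef)
    (Q : EuclideanSpace ℝ (Fin d) → Matrix (Fin N) (Fin N) ℝ)
    (hQoff : ∀ x i j, i ≠ j → 0 ≤ Q x i j)
    (hQrow : ∀ x i, ∑ j, Q x i j = 0)
    (D : Set (EuclideanSpace ℝ (Fin d))) (hD : IsOpen D) (h0D : (0 : EuclideanSpace ℝ (Fin d)) ∈ D)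
    (Q1 : Matrix (Fin N) (Fin N) ℝ)
    (hQ1off : ∀ i j, i ≠ j → 0 ≤ Q1 i j)
    (hQ1row : ∀ i, ∑ j, Q1 i j = 0)
    (α1 : ℝ) (hα1 : 0 < α1)
    (hQeq : ∀ x : EuclideanSpace ℝ (Fin d), ‖x‖ < α1 → Q x = Q1)
    (ρ h : EuclideanSpace ℝ (Fin d) → ℝ)
    (hρpos : ∀ x ∈ D \ {0}, 0 < ρ x)
    (hhpos : ∀ x ∈ D \ {0}, 0 < h x)
    (hρC2 : ContDiffOn ℝ 2 ρ (D \ {0}))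
    (hhC2 : ContDiffOn ℝ 2 h (D \ {0}))
    (β : Fin N → ℝ)
    (hL : ∀ x ∈ D \ {0}, ∀ i, diffGen (fun y => b y i) (fun y => a y i) ρ x ≤ β i * h x)
    (hLh : ∀ i, Tendsto (fun x => diffGen (fun y => b y i) (fun y => a y i) h x / h x)
      (nhdsWithin 0 (D \ {0})) (nhds 0))
    (c : ℝ) (hc : 0 < c)
    (ξ : Fin N → ℝ) (hξ : ∀ i, 0 < ξ i)
    (hfred : ∀ i, Q1.mulVec ξ i = -c - β i) :
    ∃ δ : ℝ, 0 < δ ∧ δ ≤ α1 ∧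
      {x : EuclideanSpace ℝ (Fin d) | x ≠ 0 ∧ ‖x‖ < δ} ⊆ D \ {0} ∧
      ∀ x : EuclideanSpace ℝ (Fin d), x ≠ 0 → ‖x‖ < δ → ∀ i,
        hybridGen b a Q (fun y j => ρ y + ξ j * h y) x i ≤ -(c / 2) * h x ∧
        -(c / 2) * h x < 0 :=
  lyapunov_stability_L2_general N d b a Q hQrow D hD h0D Q1 α1 hα1 hQeq ρ h hhpos hρC2 hhC2 β hL hLh
    c hc ξ hξ hfred
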